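/- For the cone over dP₂ (toric diagram #6), the minimized volume of the Sasaki–Einstein base is (59 + 11√33)/486, attained at b₁ = b₂ = (57 − 9√33)/16. -/
import Mathlib


/-- The volume function of the cone over `dP₂` (with `b₃ = 3`). -/
noncomputable def VdP2 (b₁ b₂ : ℝ) : ℝ :=
  (63 - b₁ ^ 2 + 2 * b₁ * b₂ - 6 * b₁ - b₂ ^ 2 - 6 * b₂) /
    ((3 - b₁) * (3 - b₂) * (3 + b₂ - b₁) * (b₁ - b₂ + 3) * (b₁ + b₂ + 3))

/-- For the cone over `dP₂`, the minimized volume is `(59 + 11√33)/486`, attained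
at `b₁ = b₂ = (57 − 9√33)/16`. -/
theorem volume_min_dP2 :
    (∀ b₁ b₂ : ℝ, 0 < 3 - b₁ → 0 < 3 - b₂ → 0 < 3 + b₂ - b₁ → 0 < b₁ - b₂ + 3 →
      0 < b₁ + b₂ + 3 →
      (59 + 11 * Real.sqrt 33) / 486 ≤ VdP2 b₁ b₂) ∧
    VdP2 ((57 - 9 * Real.sqrt 33) / 16) ((57 - 9 * Real.sqrt 33) / 16) =
      (59 + 11 * Real.sqrt 33) / 486 := by
  have hs : Real.sqrt 33 ^ 2 = 33 := Real.sq_sqrt (by norm_num)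
  set s : ℝ := Real.sqrt 33 with hsdef
  have hsnn : 0 ≤ s := Real.sqrt_nonneg 33
  have hs5 : 5 < s := by nlinarith [hs, hsnn]
  have hs6 : s < 6 := by nlinarith [hs, hsnn]
  constructor
  · intro b₁ b₂ h1 h2 h3 h4 h5
    have hD : 0 < (3 - b₁) * (3 - b₂) * (3 + b₂ - b₁) * (b₁ - b₂ + 3) * (b₁ + b₂ + 3) := by
      positivity
    rw [VdP2, div_le_div_iff₀ (by norm_num) hD]
    -- abbreviations: x = 6 - b₁ - b₂, w = (b₁ - b₂)^2
    have hx : 0 < 6 - b₁ - b₂ := by linarith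
    have hx9 : 6 - b₁ - b₂ < 9 := by linarith
    have hw : (b₁ - b₂) ^ 2 ≤ (6 - b₁ - b₂) ^ 2 := by nlinarith [mul_pos h1 h2]
    have h59 : (0:ℝ) ≤ 9 * (59 + 11 * s) := by linarith
    have hlast : (0:ℝ) ≤ (6 - b₁ - b₂) + 9 * (s - 5) / 4 := by linarith
    have hT1 : 0 ≤ ((6 - b₁ - b₂) ^ 2 - (b₁ - b₂) ^ 2) *
        (9 * (59 + 11 * s) * ((6 - b₁ - b₂) - 9 * (s - 1) / 8) ^ 2 *
          ((6 - b₁ - b₂) + 9 * (s - 5) / 4)) :=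
      mul_nonneg (by linarith)
        (mul_nonneg (mul_nonneg h59 (sq_nonneg _)) hlast)
    have hq : (0:ℝ) ≤ 27 + 6 * (6 - b₁ - b₂) - (6 - b₁ - b₂) ^ 2 := by nlinarith
    have hT2 : 0 ≤ 1944 * (b₁ - b₂) ^ 2 *
        (27 + 6 * (6 - b₁ - b₂) - (6 - b₁ - b₂) ^ 2) :=
      mul_nonneg (mul_nonneg (by norm_num) (sq_nonneg _)) hq
    have hT3 : 0 ≤ (59 + 11 * s) * (9 - (6 - b₁ - b₂)) * (b₁ - b₂) ^ 2 *
        ((6 - b₁ - b₂) ^ 2 - (b₁ - b₂) ^ 2) * (6 - b₁ - b₂) ^ 2 :=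
      mul_nonneg (mul_nonneg (mul_nonneg
        (mul_nonneg (by linarith) (by linarith)) (sq_nonneg _)) (by linarith)) (sq_nonneg _)
    have hkey : 4 * (6 - b₁ - b₂) ^ 2 *
        (486 * (63 - b₁ ^ 2 + 2 * b₁ * b₂ - 6 * b₁ - b₂ ^ 2 - 6 * b₂) -
          (59 + 11 * s) *
            ((3 - b₁) * (3 - b₂) * (3 + b₂ - b₁) * (b₁ - b₂ + 3) * (b₁ + b₂ + 3))) =
        ((6 - b₁ - b₂) ^ 2 - (b₁ - b₂) ^ 2) *
          (9 * (59 + 11 * s) * ((6 - b₁ - b₂) - 9 * (s - 1) / 8) ^ 2 *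
            ((6 - b₁ - b₂) + 9 * (s - 5) / 4)) +
        1944 * (b₁ - b₂) ^ 2 * (27 + 6 * (6 - b₁ - b₂) - (6 - b₁ - b₂) ^ 2) +
        (59 + 11 * s) * (9 - (6 - b₁ - b₂)) * (b₁ - b₂) ^ 2 *
          ((6 - b₁ - b₂) ^ 2 - (b₁ - b₂) ^ 2) * (6 - b₁ - b₂) ^ 2 := by
      linear_combination ((-14427639/64:ℝ) + (3129597/32:ℝ)*s + (-649539/64:ℝ)*s^2 +
        (6515073/64:ℝ)*b₂ + (-1476225/32:ℝ)*b₂*s + (216513/64:ℝ)*b₂*s^2 +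
        (-142155/16:ℝ)*b₂^2 + (72171/16:ℝ)*b₂^2*s + (6515073/64:ℝ)*b₁ +
        (-1476225/32:ℝ)*b₁*s + (216513/64:ℝ)*b₁*s^2 + (-2740311/64:ℝ)*b₁*b₂ +
        (636417/32:ℝ)*b₁*b₂*s + (-72171/64:ℝ)*b₁*b₂*s^2 + (47385/16:ℝ)*b₁*b₂^2 +
        (-24057/16:ℝ)*b₁*b₂^2*s + (-142155/16:ℝ)*b₁^2 + (72171/16:ℝ)*b₁^2*s +
        (47385/16:ℝ)*b₁^2*b₂ + (-24057/16:ℝ)*b₁^2*b₂*s) * hs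
    have hsum : 0 ≤ 4 * (6 - b₁ - b₂) ^ 2 *
        (486 * (63 - b₁ ^ 2 + 2 * b₁ * b₂ - 6 * b₁ - b₂ ^ 2 - 6 * b₂) -
          (59 + 11 * s) *
            ((3 - b₁) * (3 - b₂) * (3 + b₂ - b₁) * (b₁ - b₂ + 3) * (b₁ + b₂ + 3))) := by
      rw [hkey]; linarith
    have hx2 : (0:ℝ) < 4 * (6 - b₁ - b₂) ^ 2 := by positivity
    have hE : 0 ≤ 486 * (63 - b₁ ^ 2 + 2 * b₁ * b₂ - 6 * b₁ - b₂ ^ 2 - 6 * b₂) -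
        (59 + 11 * s) *
          ((3 - b₁) * (3 - b₂) * (3 + b₂ - b₁) * (b₁ - b₂ + 3) * (b₁ + b₂ + 3)) :=
      nonneg_of_mul_nonneg_right (by linarith [hsum]) hx2
    linarith
  · have ht3 : (0:ℝ) < 3 - (57 - 9 * s) / 16 := by nlinarith
    have ht0 : (0:ℝ) < (57 - 9 * s) / 16 := by nlinarith
    have hD2 : (0:ℝ) < (3 - (57 - 9 * s) / 16) * (3 - (57 - 9 * s) / 16) *
        (3 + (57 - 9 * s) / 16 - (57 - 9 * s) / 16) *
        ((57 - 9 * s) / 16 - (57 - 9 * s) / 16 + 3) *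
        ((57 - 9 * s) / 16 + (57 - 9 * s) / 16 + 3) :=
      mul_pos (mul_pos (mul_pos (mul_pos ht3 ht3) (by linarith)) (by linarith)) (by linarith)
    rw [VdP2, div_eq_div_iff (ne_of_gt hD2) (by norm_num)]
    linear_combination ((72171/2048:ℝ)*s^2 + (-203391/1024:ℝ)*s + (-505197/2048:ℝ)) * hs
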